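/- Let ω : ℝ³ × ℝ³ → ℝ^{3×3} be a smooth matrix-valued kernel, let f : ℝ³ → ℝ be smooth and compactly supported, and let ψ : ℝ³ → ℝ be smooth. Then the weak form of the collision operator admits the double integration-by-parts representation ∫_{ℝ³} ψ(v) C_ω[f](v) dv = ∑_{i,j} ∫∫ ω_{ij}(v,v') f(v) f(v') ∂²ψ/∂v_i∂v_j (v) dv' dv + ∑_{i,j} ∫∫ [∂ω_{ij}/∂v_j (v,v') − ∂ω_{ij}/∂v'_j (v,v')] f(v) f(v') ∂ψ/∂v_i (v) dv' dv. -/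

import Mathlib

open MeasureTheory Matrix
open scoped RealInnerProductSpace ContDiff

noncomputable section

/-- ℝ³ as three-dimensional Euclidean space. -/
abbrev E3 : Type := EuclideanSpace ℝ (Fin 3)

/-- A 3×3 matrix acting on a Euclidean vector. -/
def matVec (M : Matrix (Fin 3) (Fin 3) ℝ) (x : E3) : E3 :=
  (EuclideanSpace.equiv (Fin 3) ℝ).symm (M.mulVec (EuclideanSpace.equiv (Fin 3) ℝ x))

/-- Divergence of a vector field on ℝ³. -/
def div3 (F : E3 → E3) (v : E3) : ℝ :=
  ∑ i : Fin 3, fderiv ℝ F v (EuclideanSpace.single i 1) i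

/-- The integrand Ω(v,v') (f(v') ∇f(v) − f(v) ∇f(v')) of the collision operator. -/
def collKer (Ω : E3 → E3 → Matrix (Fin 3) (Fin 3) ℝ) (f : E3 → ℝ) (v v' : E3) : E3 :=
  matVec (Ω v v') (f v' • gradient f v - f v • gradient f v')

/-- The collision operator C_Ω[f](v) = div_v ∫ Ω(v,v')(f(v')∇f(v) − f(v)∇f(v')) dv'. -/
def collOp (Ω : E3 → E3 → Matrix (Fin 3) (Fin 3) ℝ) (f : E3 → ℝ) (v : E3) : ℝ :=
  div3 (fun w => ∫ v', collKer Ω f w v') v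

/-- Partial derivative of a scalar function on ℝ³ in the i-th coordinate direction. -/
def pd (h : E3 → ℝ) (i : Fin 3) (v : E3) : ℝ :=
  fderiv ℝ h v (EuclideanSpace.single i 1)

/-!
The collision operator is the divergence of the flux `G(v) = ∫ collKer Ω f v v' dv'`, so one
integration by parts in `v` turns `∫ ψ C_Ω[f]` into `-∑ᵢ ∫ ∂ᵢψ Gᵢ`. Integrating by parts in `v'`
inside the flux gives `Gᵢ = ∑ⱼ (Aᵢⱼ ∂ⱼf + f Bᵢⱼ)`, where `Aᵢⱼ(v) = ∫ Ωᵢⱼ(v,v') f(v') dv'` and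
`Bᵢⱼ(v) = ∫ ∂'ⱼΩᵢⱼ(v,v') f(v') dv'`. A second integration by parts in `v` moves `∂ⱼ` from `f`
onto `∂ᵢψ Aᵢⱼ`, and `∂ⱼAᵢⱼ(v) = ∫ ∂ⱼΩᵢⱼ(v,v') f(v') dv'`. Every `v'`-integrand vanishes outside
the compact support of `f`, which justifies differentiating under the integral sign and makes all
boundary terms vanish.
-/

section ParametricIntegral

variable {E E' F : Type*} [NormedAddCommGroup E] [NormedSpace ℝ E]
  [NormedAddCommGroup F] [NormedSpace ℝ F] {K : Set E'}

theorem continuous_integral_of_eq_zero_off_compact [FiniteDimensional ℝ E] [TopologicalSpace E']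
    [MeasurableSpace E'] [OpensMeasurableSpace E'] [SecondCountableTopologyEither E' F]
    {μ : Measure E'} [IsLocallyFiniteMeasure μ] {H : E → E' → F}
    (hH : Continuous (Function.uncurry H)) (hK : IsCompact K) (hH0 : ∀ v, ∀ v' ∉ K, H v v' = 0) :
    Continuous fun v => ∫ v', H v v' ∂μ :=
  (continuous_parametric_integral_of_continuous hH hK).congr fun v =>
    setIntegral_eq_integral_of_forall_compl_eq_zero (hH0 v)

theorem fderiv_partial_eq_zero_of_notMem {H : E → E' → F} (hH0 : ∀ v, ∀ v' ∉ K, H v v' = 0)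
    {v' : E'} (hv' : v' ∉ K) (v : E) : fderiv ℝ (fun w => H w v') v = 0 := by
  simp only [hH0 _ v' hv', fderiv_const_apply]

variable [NormedAddCommGroup E'] [NormedSpace ℝ E'] {H : E → E' → F}

theorem continuous_fderiv_partial (hH : ContDiff ℝ 1 (Function.uncurry H)) :
    Continuous (Function.uncurry fun v v' => fderiv ℝ (fun w => H w v') v) :=
  Continuous.fderiv (hH.comp (contDiff_snd.prodMk (contDiff_snd.comp contDiff_fst)))
    continuous_fst le_rfl

variable [FiniteDimensional ℝ E] [SecondCountableTopology E'] [MeasurableSpace E'] [BorelSpace E']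
  {μ : Measure E'} [IsLocallyFiniteMeasure μ]

theorem hasFDerivAt_integral_of_eq_zero_off_compact (hH : ContDiff ℝ 1 (Function.uncurry H))
    (hK : IsCompact K) (hH0 : ∀ v, ∀ v' ∉ K, H v v' = 0) (v₀ : E) :
    HasFDerivAt (fun v => ∫ v', H v v' ∂μ) (∫ v', fderiv ℝ (fun w => H w v') v₀ ∂μ) v₀ := by
  have hc : Continuous (Function.uncurry H) := hH.continuous
  have hc' := continuous_fderiv_partial hH
  obtain ⟨U, hU, hUv₀⟩ := exists_compact_mem_nhds v₀
  obtain ⟨C, hC⟩ := (hU.prod hK).exists_bound_of_continuousOn hc'.continuousOn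
  have hdiff : ∀ v v', HasFDerivAt (fun w => H w v') (fderiv ℝ (fun w => H w v') v) v :=
    fun v v' => ((hH.comp (contDiff_id.prodMk contDiff_const)).differentiable one_ne_zero
      v).hasFDerivAt
  refine hasFDerivAt_integral_of_dominated_of_fderiv_le (bound := K.indicator fun _ => C) hUv₀
    (.of_forall fun v => (hc.comp (Continuous.prodMk_right v)).aestronglyMeasurable)
    ((hc.comp (Continuous.prodMk_right v₀)).integrable_of_hasCompactSupport
      (HasCompactSupport.intro hK (hH0 v₀)))
    (hc'.comp (Continuous.prodMk_right v₀)).aestronglyMeasurable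
    (.of_forall fun v' v hv => ?_)
    ((integrable_indicator_iff hK.measurableSet).2 (integrableOn_const hK.measure_ne_top))
    (.of_forall fun v' v _ => hdiff v v')
  by_cases hv' : v' ∈ K
  · simpa [Set.indicator_of_mem hv'] using hC (v, v') ⟨hv, hv'⟩
  · simp [Set.indicator_of_notMem hv', fderiv_partial_eq_zero_of_notMem hH0 hv']

theorem fderiv_integral_apply_of_eq_zero_off_compact [CompleteSpace F]
    (hH : ContDiff ℝ 1 (Function.uncurry H)) (hK : IsCompact K)
    (hH0 : ∀ v, ∀ v' ∉ K, H v v' = 0) (v e : E) :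
    fderiv ℝ (fun v => ∫ v', H v v' ∂μ) v e = ∫ v', fderiv ℝ (fun w => H w v') v e ∂μ := by
  rw [(hasFDerivAt_integral_of_eq_zero_off_compact hH hK hH0 v).fderiv]
  refine ContinuousLinearMap.integral_apply ?_ e
  exact ((continuous_fderiv_partial hH).comp (Continuous.prodMk_right v)
    ).integrable_of_hasCompactSupport
      (HasCompactSupport.intro hK fun v' hv' => fderiv_partial_eq_zero_of_notMem hH0 hv' v)

theorem contDiff_one_integral_of_eq_zero_off_compact (hH : ContDiff ℝ 1 (Function.uncurry H))
    (hK : IsCompact K) (hH0 : ∀ v, ∀ v' ∉ K, H v v' = 0) :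
    ContDiff ℝ 1 fun v => ∫ v', H v v' ∂μ := by
  have hderiv := hasFDerivAt_integral_of_eq_zero_off_compact (μ := μ) hH hK hH0
  refine contDiff_one_iff_fderiv.2 ⟨fun v => (hderiv v).differentiableAt, ?_⟩
  rw [funext fun v => (hderiv v).fderiv]
  exact continuous_integral_of_eq_zero_off_compact (continuous_fderiv_partial hH) hK
    fun v v' hv' => fderiv_partial_eq_zero_of_notMem hH0 hv' v

end ParametricIntegral

section IntegrationByParts

theorem Continuous.integrable_mul_of_hasCompactSupport {X : Type*} [TopologicalSpace X]
    [MeasurableSpace X] [OpensMeasurableSpace X] {μ : Measure X} [IsFiniteMeasureOnCompacts μ]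
    {u g : X → ℝ} (hu : Continuous u) (hg : Continuous g) (hgc : HasCompactSupport g) :
    Integrable (fun x => u x * g x) μ :=
  (hu.mul hg).integrable_of_hasCompactSupport hgc.mul_left

variable {E : Type*} [NormedAddCommGroup E] [NormedSpace ℝ E] [FiniteDimensional ℝ E]
  [MeasurableSpace E] [BorelSpace E] {μ : Measure E} [μ.IsAddHaarMeasure]

theorem integral_mul_fderiv_eq_neg_fderiv_mul_of_hasCompactSupport {u g : E → ℝ}
    (hu : ContDiff ℝ 1 u) (hg : ContDiff ℝ 1 g) (hgc : HasCompactSupport g) (e : E) :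
    ∫ x, u x * fderiv ℝ g x e ∂μ = -∫ x, fderiv ℝ u x e * g x ∂μ := by
  have hu' : Continuous fun x => fderiv ℝ u x e :=
    (hu.continuous_fderiv one_ne_zero).clm_apply continuous_const
  have hg' : Continuous fun x => fderiv ℝ g x e :=
    (hg.continuous_fderiv one_ne_zero).clm_apply continuous_const
  exact integral_mul_fderiv_eq_neg_fderiv_mul_of_integrable
    (hu'.integrable_mul_of_hasCompactSupport hg.continuous hgc)
    (hu.continuous.integrable_mul_of_hasCompactSupport hg' (hgc.fderiv_apply (𝕜 := ℝ) e))
    (hu.continuous.integrable_mul_of_hasCompactSupport hg.continuous hgc)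
    (fun x _ => hu.differentiable one_ne_zero x) (fun x _ => hg.differentiable one_ne_zero x)

end IntegrationByParts

section PartialDerivatives

theorem contDiff_pd {h : E3 → ℝ} {m n : WithTop ℕ∞} (hh : ContDiff ℝ n h) (hmn : m + 1 ≤ n)
    (i : Fin 3) : ContDiff ℝ m (pd h i) :=
  (hh.fderiv_right hmn).clm_apply contDiff_const

theorem continuous_pd {h : E3 → ℝ} (hh : ContDiff ℝ 1 h) (i : Fin 3) : Continuous (pd h i) :=
  (contDiff_pd (m := 0) hh (by norm_num) i).continuous

theorem HasCompactSupport.pd {h : E3 → ℝ} (hh : HasCompactSupport h) (i : Fin 3) :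
    HasCompactSupport (pd h i) :=
  hh.fderiv_apply (𝕜 := ℝ) _

theorem pd_eq_zero_of_notMem_tsupport {h : E3 → ℝ} {v : E3} (hv : v ∉ tsupport h) (i : Fin 3) :
    pd h i v = 0 := by
  simp [pd, fderiv_of_notMem_tsupport (𝕜 := ℝ) hv]

theorem gradient_apply_eq_pd (h : E3 → ℝ) (v : E3) (i : Fin 3) : gradient h v i = pd h i v := by
  have h1 : ⟪gradient h v, EuclideanSpace.single i 1⟫ = pd h i v := inner_gradient_left
  rw [EuclideanSpace.inner_single_right] at h1
  simpa using h1

theorem div3_eq_sum_pd {G : E3 → E3} {v : E3} (hG : DifferentiableAt ℝ G v) :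
    div3 G v = ∑ i, pd (fun w => G w i) i v := by
  refine Finset.sum_congr rfl fun i _ => ?_
  rw [pd, show (fun w => G w i) = EuclideanSpace.proj i ∘ G from rfl,
    ((EuclideanSpace.proj i).hasFDerivAt.comp v hG.hasFDerivAt).fderiv]
  rfl

theorem pd_mul {u g : E3 → ℝ} {v : E3} (hu : DifferentiableAt ℝ u v)
    (hg : DifferentiableAt ℝ g v) (i : Fin 3) :
    pd (fun w => u w * g w) i v = pd u i v * g v + u v * pd g i v := by
  simp [pd, fderiv_fun_mul hu hg]
  ring

theorem pd_comm {ψ : E3 → ℝ} (hψ : ContDiff ℝ 2 ψ) (i j : Fin 3) (v : E3) :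
    pd (pd ψ i) j v = pd (pd ψ j) i v := by
  have hd : DifferentiableAt ℝ (fderiv ℝ ψ) v :=
    (hψ.fderiv_right (m := 1) le_rfl).differentiable one_ne_zero v
  have second : ∀ a b, pd (pd ψ a) b v =
      fderiv ℝ (fderiv ℝ ψ) v (EuclideanSpace.single b 1) (EuclideanSpace.single a 1) := by
    intro a b
    change fderiv ℝ (fun w => fderiv ℝ ψ w (EuclideanSpace.single a 1)) v _ = _
    rw [fderiv_clm_apply hd (differentiableAt_const _)]
    simp
  rw [second, second, hψ.contDiffAt.isSymmSndFDerivAt (by simp)]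

theorem integral_mul_pd_eq_neg_integral_pd_mul {u g : E3 → ℝ} (hu : ContDiff ℝ 1 u)
    (hg : ContDiff ℝ 1 g) (hgc : HasCompactSupport g) (i : Fin 3) :
    ∫ v, u v * pd g i v = -∫ v, pd u i v * g v :=
  integral_mul_fderiv_eq_neg_fderiv_mul_of_hasCompactSupport hu hg hgc _

end PartialDerivatives

def kernelIntegral (k : E3 → E3 → ℝ) (f : E3 → ℝ) (v : E3) : ℝ :=
  ∫ v', k v v' * f v'

section KernelIntegral

variable {k : E3 → E3 → ℝ} {f : E3 → ℝ}

theorem continuous_kernelIntegral (hk : Continuous (Function.uncurry k)) (hf : Continuous f)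
    (hfc : HasCompactSupport f) : Continuous (kernelIntegral k f) :=
  continuous_integral_of_eq_zero_off_compact (H := fun v v' => k v v' * f v')
    (hk.mul (hf.comp continuous_snd)) hfc fun _ _ hv' => by
      simp [image_eq_zero_of_notMem_tsupport hv']

theorem contDiff_one_kernelIntegral (hk : ContDiff ℝ 1 (Function.uncurry k))
    (hf : ContDiff ℝ 1 f) (hfc : HasCompactSupport f) : ContDiff ℝ 1 (kernelIntegral k f) :=
  contDiff_one_integral_of_eq_zero_off_compact (H := fun v v' => k v v' * f v')
    (hk.mul (hf.comp contDiff_snd)) hfc fun _ _ hv' => by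
      simp [image_eq_zero_of_notMem_tsupport hv']

theorem pd_kernelIntegral (hk : ContDiff ℝ 1 (Function.uncurry k)) (hf : ContDiff ℝ 1 f)
    (hfc : HasCompactSupport f) (j : Fin 3) (v : E3) :
    pd (kernelIntegral k f) j v = kernelIntegral (fun v v' => pd (fun w => k w v') j v) f v := by
  change fderiv ℝ (fun v => ∫ v', k v v' * f v') v _ = _
  rw [fderiv_integral_apply_of_eq_zero_off_compact (hk.mul (hf.comp contDiff_snd)) hfc
    fun _ _ hv' => by simp [image_eq_zero_of_notMem_tsupport hv']]
  refine integral_congr_ae (.of_forall fun v' => ?_)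
  have hkv : DifferentiableAt ℝ (fun w => k w v') v :=
    (hk.comp (contDiff_id.prodMk contDiff_const)).differentiable one_ne_zero v
  simp [pd, fderiv_mul_const hkv, mul_comm]

theorem continuous_pd_fst (hk : ContDiff ℝ 1 (Function.uncurry k)) (j : Fin 3) :
    Continuous (Function.uncurry fun v v' => pd (fun w => k w v') j v) :=
  (continuous_fderiv_partial hk).clm_apply continuous_const

theorem continuous_pd_snd (hk : ContDiff ℝ 1 (Function.uncurry k)) (j : Fin 3) :
    Continuous (Function.uncurry fun v v' => pd (k v) j v') :=
  ((continuous_fderiv_partial (H := fun v' v => k v v')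
    (hk.comp (contDiff_snd.prodMk contDiff_fst))).clm_apply continuous_const).comp continuous_swap

theorem integral_kernel_mul_sub (hk : ContDiff ℝ 1 (Function.uncurry k))
    (hf : ContDiff ℝ 1 f) (hfc : HasCompactSupport f) (v : E3) (j : Fin 3) :
    ∫ v', k v v' * (f v' * pd f j v - f v * pd f j v') =
      kernelIntegral k f v * pd f j v + f v * kernelIntegral (fun v v' => pd (k v) j v') f v := by
  have hkv : ContDiff ℝ 1 (k v) := hk.comp (contDiff_const.prodMk contDiff_id)
  have hint₁ : Integrable fun v' => k v v' * f v' :=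
    hkv.continuous.integrable_mul_of_hasCompactSupport hf.continuous hfc
  have hint₂ : Integrable fun v' => k v v' * pd f j v' :=
    hkv.continuous.integrable_mul_of_hasCompactSupport (continuous_pd hf j) (hfc.pd j)
  calc ∫ v', k v v' * (f v' * pd f j v - f v * pd f j v')
      = ∫ v', (pd f j v * (k v v' * f v') - f v * (k v v' * pd f j v')) :=
        integral_congr_ae (.of_forall fun v' => by ring)
    _ = pd f j v * kernelIntegral k f v - f v * ∫ v', k v v' * pd f j v' := by
        rw [integral_sub (hint₁.const_mul _) (hint₂.const_mul _), integral_const_mul,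
          integral_const_mul, kernelIntegral]
    _ = _ := by
        rw [integral_mul_pd_eq_neg_integral_pd_mul hkv hf hfc]
        simp only [kernelIntegral]
        ring

end KernelIntegral

section CollisionKernel

variable {Ω : E3 → E3 → Matrix (Fin 3) (Fin 3) ℝ} {f : E3 → ℝ}

theorem collKer_apply (v v' : E3) (i : Fin 3) :
    collKer Ω f v v' i = ∑ j, Ω v v' i j * (f v' * pd f j v - f v * pd f j v') := by
  simp [collKer, matVec, Matrix.mulVec, dotProduct, gradient_apply_eq_pd]

theorem collKer_eq_zero_of_notMem_fst {v : E3} (hv : v ∉ tsupport f) (v' : E3) :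
    collKer Ω f v v' = 0 := by
  ext i
  simp [collKer_apply, image_eq_zero_of_notMem_tsupport hv, pd_eq_zero_of_notMem_tsupport hv]

theorem collKer_eq_zero_of_notMem_snd (v : E3) {v' : E3} (hv' : v' ∉ tsupport f) :
    collKer Ω f v v' = 0 := by
  ext i
  simp [collKer_apply, image_eq_zero_of_notMem_tsupport hv', pd_eq_zero_of_notMem_tsupport hv']

theorem contDiff_collKer {n : WithTop ℕ∞}
    (hΩ : ∀ i j, ContDiff ℝ n fun p : E3 × E3 => Ω p.1 p.2 i j) (hf : ContDiff ℝ (n + 1) f) :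
    ContDiff ℝ n (Function.uncurry (collKer Ω f)) := by
  refine contDiff_euclidean.2 fun i => ?_
  simp only [Function.uncurry_def, collKer_apply]
  have hf' : ContDiff ℝ n f := hf.of_le le_self_add
  have hpd : ∀ j, ContDiff ℝ n (pd f j) := fun j => contDiff_pd hf le_rfl j
  exact ContDiff.sum fun j _ => (hΩ i j).mul
    (((hf'.comp contDiff_snd).mul ((hpd j).comp contDiff_fst)).sub
      ((hf'.comp contDiff_fst).mul ((hpd j).comp contDiff_snd)))

theorem contDiff_one_integral_collKer
    (hΩ : ∀ i j, ContDiff ℝ 1 fun p : E3 × E3 => Ω p.1 p.2 i j) (hf : ContDiff ℝ 2 f)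
    (hfc : HasCompactSupport f) : ContDiff ℝ 1 fun v => ∫ v', collKer Ω f v v' :=
  contDiff_one_integral_of_eq_zero_off_compact (contDiff_collKer hΩ hf) hfc
    fun v _ => collKer_eq_zero_of_notMem_snd v

theorem hasCompactSupport_integral_collKer (hfc : HasCompactSupport f) :
    HasCompactSupport fun v => ∫ v', collKer Ω f v v' :=
  HasCompactSupport.intro hfc fun v hv => by simp [collKer_eq_zero_of_notMem_fst hv]

theorem integral_collKer_apply
    (hΩ : ∀ i j, ContDiff ℝ 1 fun p : E3 × E3 => Ω p.1 p.2 i j) (hf : ContDiff ℝ 1 f)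
    (hfc : HasCompactSupport f) (v : E3) (i : Fin 3) :
    (∫ v', collKer Ω f v v') i = ∑ j, (kernelIntegral (fun v v' => Ω v v' i j) f v * pd f j v +
      f v * kernelIntegral (fun v v' => pd (fun w => Ω v w i j) j v') f v) := by
  have hcont : Continuous (Function.uncurry (collKer Ω f)) :=
    (contDiff_collKer (n := 0) (fun i j => (hΩ i j).of_le zero_le_one) hf).continuous
  have hint : Integrable (collKer Ω f v) :=
    (hcont.comp (Continuous.prodMk_right v)).integrable_of_hasCompactSupport
      (HasCompactSupport.intro hfc fun _ => collKer_eq_zero_of_notMem_snd v)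
  refine ((EuclideanSpace.proj i).integral_comp_comm hint).symm.trans ?_
  simp only [PiLp.proj_apply, collKer_apply]
  rw [integral_finsetSum]
  · exact Finset.sum_congr rfl fun j _ =>
      integral_kernel_mul_sub (k := fun v v' => Ω v v' i j) (hΩ i j) hf hfc v j
  · intro j _
    have hΩv : Continuous fun v' => Ω v v' i j :=
      (hΩ i j).continuous.comp (Continuous.prodMk_right v)
    have := hf.continuous
    have := continuous_pd hf j
    exact hΩv.integrable_mul_of_hasCompactSupport (by fun_prop)
      (hfc.mul_right.sub (hfc.pd j).mul_left)

end CollisionKernel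

section WeakForm

variable {f ψ : E3 → ℝ} {k : E3 → E3 → ℝ}

theorem integral_mul_kernelIntegral_mul_pd {u : E3 → ℝ} (hu : ContDiff ℝ 1 u)
    (hk : ContDiff ℝ 1 (Function.uncurry k)) (hf : ContDiff ℝ 1 f) (hfc : HasCompactSupport f)
    (j : Fin 3) :
    ∫ v, u v * kernelIntegral k f v * pd f j v =
      -∫ v, (pd u j v * kernelIntegral k f v +
        u v * kernelIntegral (fun v v' => pd (fun w => k w v') j v) f v) * f v := by
  have ha := contDiff_one_kernelIntegral hk hf hfc
  rw [integral_mul_pd_eq_neg_integral_pd_mul (u := fun v => u v * kernelIntegral k f v)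
    (hu.mul ha) hf hfc j]
  congr 1
  refine integral_congr_ae (.of_forall fun v => ?_)
  dsimp only
  rw [pd_mul (hu.differentiable one_ne_zero v) (ha.differentiable one_ne_zero v),
    pd_kernelIntegral hk hf hfc]

theorem integrable_pd_mul_kernel_flux (hk : ContDiff ℝ 1 (Function.uncurry k))
    (hf : ContDiff ℝ 1 f) (hfc : HasCompactSupport f) (hψ : ContDiff ℝ 1 ψ) (i j : Fin 3) :
    Integrable fun v => pd ψ i v * (kernelIntegral k f v * pd f j v +
      f v * kernelIntegral (fun v v' => pd (k v) j v') f v) := by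
  have ha := (contDiff_one_kernelIntegral hk hf hfc).continuous
  have hb := continuous_kernelIntegral (continuous_pd_snd hk j) hf.continuous hfc
  have := hf.continuous
  have := continuous_pd hf j
  exact (continuous_pd hψ i).integrable_mul_of_hasCompactSupport (by fun_prop)
    ((hfc.pd j).mul_left.add hfc.mul_right)

theorem neg_integral_pd_mul_kernel_flux (hk : ContDiff ℝ 1 (Function.uncurry k))
    (hf : ContDiff ℝ 1 f) (hfc : HasCompactSupport f) (hψ : ContDiff ℝ 2 ψ) (i j : Fin 3) :
    -∫ v, pd ψ i v * (kernelIntegral k f v * pd f j v +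
        f v * kernelIntegral (fun v v' => pd (k v) j v') f v) =
      (∫ v, pd (pd ψ i) j v * kernelIntegral k f v * f v) +
        ((∫ v, pd ψ i v * kernelIntegral (fun v v' => pd (fun w => k w v') j v) f v * f v) -
          ∫ v, pd ψ i v * kernelIntegral (fun v v' => pd (k v) j v') f v * f v) := by
  set a := kernelIntegral k f
  set a' := kernelIntegral (fun v v' => pd (fun w => k w v') j v) f
  set b := kernelIntegral (fun v v' => pd (k v) j v') f
  have hp : ContDiff ℝ 1 (pd ψ i) := contDiff_pd hψ (by norm_num) i
  have ha : Continuous a := (contDiff_one_kernelIntegral hk hf hfc).continuous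
  have ha' : Continuous a' := continuous_kernelIntegral (continuous_pd_fst hk j) hf.continuous hfc
  have hb : Continuous b := continuous_kernelIntegral (continuous_pd_snd hk j) hf.continuous hfc
  have hsplit : ∫ v, pd ψ i v * (a v * pd f j v + f v * b v) =
      (∫ v, pd ψ i v * a v * pd f j v) + ∫ v, pd ψ i v * b v * f v :=
    (integral_congr_ae (.of_forall fun v => by ring)).trans <| integral_add
      ((hp.continuous.mul ha).integrable_mul_of_hasCompactSupport (continuous_pd hf j) (hfc.pd j))
      ((hp.continuous.mul hb).integrable_mul_of_hasCompactSupport hf.continuous hfc)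
  have hsplit' : ∫ v, (pd (pd ψ i) j v * a v + pd ψ i v * a' v) * f v =
      (∫ v, pd (pd ψ i) j v * a v * f v) + ∫ v, pd ψ i v * a' v * f v :=
    (integral_congr_ae (.of_forall fun v => by ring)).trans <| integral_add
      (((continuous_pd hp j).mul ha).integrable_mul_of_hasCompactSupport hf.continuous hfc)
      ((hp.continuous.mul ha').integrable_mul_of_hasCompactSupport hf.continuous hfc)
  rw [hsplit, integral_mul_kernelIntegral_mul_pd hp hk hf hfc j, hsplit']
  ring

theorem integral_integral_kernel_mul_pd_pd (hψ : ContDiff ℝ 2 ψ) (i j : Fin 3) :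
    ∫ v, ∫ v', k v v' * (f v * f v') * pd (pd ψ j) i v =
      ∫ v, pd (pd ψ i) j v * kernelIntegral k f v * f v := by
  refine integral_congr_ae (.of_forall fun v => ?_)
  dsimp only
  rw [pd_comm hψ j i, kernelIntegral, ← integral_const_mul, ← integral_mul_const]
  exact integral_congr_ae (.of_forall fun v' => by ring)

theorem integral_integral_pd_sub_pd_mul_pd (hk : ContDiff ℝ 1 (Function.uncurry k))
    (hf : ContDiff ℝ 1 f) (hfc : HasCompactSupport f) (hψ : ContDiff ℝ 1 ψ) (i j : Fin 3) :
    ∫ v, ∫ v', (pd (fun w => k w v') j v - pd (k v) j v') * (f v * f v') * pd ψ i v =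
      (∫ v, pd ψ i v * kernelIntegral (fun v v' => pd (fun w => k w v') j v) f v * f v) -
        ∫ v, pd ψ i v * kernelIntegral (fun v v' => pd (k v) j v') f v * f v := by
  set a' := kernelIntegral (fun v v' => pd (fun w => k w v') j v) f
  set b := kernelIntegral (fun v v' => pd (k v) j v') f
  have hp := continuous_pd hψ i
  have inner : ∀ v, ∫ v', (pd (fun w => k w v') j v - pd (k v) j v') * (f v * f v') * pd ψ i v =
      pd ψ i v * a' v * f v - pd ψ i v * b v * f v := by
    intro v
    have hdiff : a' v - b v = ∫ v', (pd (fun w => k w v') j v - pd (k v) j v') * f v' :=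
      (integral_sub
        (((continuous_pd_fst hk j).comp (Continuous.prodMk_right v)
          ).integrable_mul_of_hasCompactSupport hf.continuous hfc)
        (((continuous_pd_snd hk j).comp (Continuous.prodMk_right v)
          ).integrable_mul_of_hasCompactSupport hf.continuous hfc)).symm.trans
        (integral_congr_ae (.of_forall fun v' => (sub_mul _ _ _).symm))
    rw [show pd ψ i v * a' v * f v - pd ψ i v * b v * f v = pd ψ i v * f v * (a' v - b v) by ring,
      hdiff, ← integral_const_mul]
    exact integral_congr_ae (.of_forall fun v' => by ring)
  rw [integral_congr_ae (.of_forall inner)]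
  exact integral_sub
    ((hp.mul (continuous_kernelIntegral (continuous_pd_fst hk j) hf.continuous hfc)
      ).integrable_mul_of_hasCompactSupport hf.continuous hfc)
    ((hp.mul (continuous_kernelIntegral (continuous_pd_snd hk j) hf.continuous hfc)
      ).integrable_mul_of_hasCompactSupport hf.continuous hfc)

theorem neg_integral_pd_mul_integral_collKer_apply {Ω : E3 → E3 → Matrix (Fin 3) (Fin 3) ℝ}
    (hΩ : ∀ i j, ContDiff ℝ 1 fun p : E3 × E3 => Ω p.1 p.2 i j) (hf : ContDiff ℝ 1 f)
    (hfc : HasCompactSupport f) (hψ : ContDiff ℝ 2 ψ) (i : Fin 3) :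
    -∫ v, pd ψ i v * (∫ v', collKer Ω f v v') i =
      ∑ j, ((∫ v, ∫ v', Ω v v' i j * (f v * f v') * pd (pd ψ j) i v) +
        ∫ v, ∫ v', (pd (fun w => Ω w v' i j) j v - pd (fun w => Ω v w i j) j v') *
          (f v * f v') * pd ψ i v) := by
  have hψ₁ : ContDiff ℝ 1 ψ := hψ.of_le one_le_two
  simp only [integral_collKer_apply hΩ hf hfc, Finset.mul_sum]
  rw [integral_finsetSum _ fun j _ => integrable_pd_mul_kernel_flux
    (k := fun v v' => Ω v v' i j) (hΩ i j) hf hfc hψ₁ i j, ← Finset.sum_neg_distrib]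
  refine Finset.sum_congr rfl fun j _ => ?_
  rw [neg_integral_pd_mul_kernel_flux (k := fun v v' => Ω v v' i j) (hΩ i j) hf hfc hψ i j,
    integral_integral_kernel_mul_pd_pd (k := fun v v' => Ω v v' i j) hψ i j,
    integral_integral_pd_sub_pd_mul_pd (k := fun v v' => Ω v v' i j) (hΩ i j) hf hfc hψ₁ i j]

theorem integral_mul_collOp {Ω : E3 → E3 → Matrix (Fin 3) (Fin 3) ℝ}
    (hΩ : ∀ i j, ContDiff ℝ 1 fun p : E3 × E3 => Ω p.1 p.2 i j) (hf : ContDiff ℝ 2 f)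
    (hfc : HasCompactSupport f) (hψ : ContDiff ℝ 1 ψ) :
    ∫ v, ψ v * collOp Ω f v = ∑ i, -∫ v, pd ψ i v * (∫ v', collKer Ω f v v') i := by
  set G := fun v => ∫ v', collKer Ω f v v'
  have hG : ContDiff ℝ 1 G := contDiff_one_integral_collKer hΩ hf hfc
  have hGi : ∀ i, ContDiff ℝ 1 fun v => G v i := contDiff_euclidean.1 hG
  have hGic : ∀ i, HasCompactSupport fun v => G v i := fun i =>
    (hasCompactSupport_integral_collKer hfc).comp_left (g := fun x : E3 => x i) rfl
  calc ∫ v, ψ v * collOp Ω f v = ∫ v, ∑ i, ψ v * pd (fun w => G w i) i v :=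
        integral_congr_ae (.of_forall fun v => by
          dsimp only
          rw [collOp, div3_eq_sum_pd (hG.differentiable one_ne_zero v), Finset.mul_sum])
    _ = _ := by
        rw [integral_finsetSum _ fun i _ => hψ.continuous.integrable_mul_of_hasCompactSupport
          (continuous_pd (hGi i) i) ((hGic i).pd i)]
        exact Finset.sum_congr rfl fun i _ =>
          integral_mul_pd_eq_neg_integral_pd_mul hψ (hGi i) (hGic i) i

end WeakForm

/-- double integration-by-parts representation of the weak form of
the collision operator. -/
theorem weak_form_double_integration_by_parts
    (Ω : E3 → E3 → Matrix (Fin 3) (Fin 3) ℝ)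
    (hΩ : ∀ i j, ContDiff ℝ ∞ fun p : E3 × E3 => Ω p.1 p.2 i j)
    (f : E3 → ℝ) (hf : ContDiff ℝ ∞ f) (hfc : HasCompactSupport f)
    (ψ : E3 → ℝ) (hψ : ContDiff ℝ ∞ ψ) :
    ∫ v, ψ v * collOp Ω f v =
      (∑ i : Fin 3, ∑ j : Fin 3, ∫ v, ∫ v',
        Ω v v' i j * (f v * f v') * pd (fun w => pd ψ j w) i v) +
      ∑ i : Fin 3, ∑ j : Fin 3, ∫ v, ∫ v',
        (pd (fun w => Ω w v' i j) j v - pd (fun w => Ω v w i j) j v') *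
          (f v * f v') * pd ψ i v := by
  have hΩ₁ : ∀ i j, ContDiff ℝ 1 fun p : E3 × E3 => Ω p.1 p.2 i j :=
    fun i j => (hΩ i j).of_le ENat.LEInfty.out
  have hf₂ : ContDiff ℝ 2 f := hf.of_le ENat.LEInfty.out
  have hψ₂ : ContDiff ℝ 2 ψ := hψ.of_le ENat.LEInfty.out
  rw [integral_mul_collOp hΩ₁ hf₂ hfc (hψ₂.of_le one_le_two), ← Finset.sum_add_distrib]
  exact Finset.sum_congr rfl fun i _ =>
    (neg_integral_pd_mul_integral_collKer_apply hΩ₁ (hf₂.of_le one_le_two) hfc hψ₂ i).trans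
      Finset.sum_add_distrib
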